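/- arXiv:2206.09230 — 7 statements merged into one kernel-verified Lean document; each statement's English description precedes it below -/
import Mathlib

section
/- For any unitary operator U on a finite-dimensional complex Hilbert space V and any two orthonormal clock states |t⟩, |t-1⟩ in a clock space C, the operator H = (1/2)(I ⊗ |t⟩⟨t| + I ⊗ |t-1⟩⟨t-1| − U ⊗ |t⟩⟨t-1| − U† ⊗ |t-1⟩⟨t|) is positive semidefinite. -/
open Matrix Kronecker ComplexOrder

lemma aux_vmv_mul {M : ℕ} (a b c d : Fin M → ℂ) :
    vecMulVec a b * vecMulVec c d = (b ⬝ᵥ c) • vecMulVec a d := by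
  ext i j
  simp [Matrix.mul_apply, vecMulVec_apply, dotProduct, Finset.mul_sum, Finset.sum_mul]
  congr 1; ext k; ring

lemma aux_vmv_ct {M : ℕ} (a b : Fin M → ℂ) :
    (vecMulVec a b)ᴴ = vecMulVec (star b) (star a) := by
  ext i j
  simp [vecMulVec_apply, mul_comm]

lemma aux_kron_ct {N M : ℕ} (A : Matrix (Fin N) (Fin N) ℂ) (B : Matrix (Fin M) (Fin M) ℂ) :
    (A ⊗ₖ B)ᴴ = Aᴴ ⊗ₖ Bᴴ := by
  ext ⟨i,j⟩ ⟨k,l⟩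
  simp [conjTranspose_apply, kroneckerMap_apply, mul_comm]

/-- The Feynman–Kitaev propagation term
`H = (1/2)(I ⊗ |t⟩⟨t| + I ⊗ |t-1⟩⟨t-1| − U ⊗ |t⟩⟨t-1| − U† ⊗ |t-1⟩⟨t|)`
is positive semidefinite, for `U` unitary and `v = |t⟩`, `w = |t-1⟩` orthonormal. -/
theorem stmt0 (N M : ℕ) (U : Matrix (Fin N) (Fin N) ℂ)
    (hU : U ∈ Matrix.unitaryGroup (Fin N) ℂ)
    (v w : Fin M → ℂ)
    (hv : star v ⬝ᵥ v = 1) (hw : star w ⬝ᵥ w = 1) (hvw : star v ⬝ᵥ w = 0) :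
    Matrix.PosSemidef ((1/2 : ℂ) •
      ((1 : Matrix (Fin N) (Fin N) ℂ) ⊗ₖ vecMulVec v (star v)
        + (1 : Matrix (Fin N) (Fin N) ℂ) ⊗ₖ vecMulVec w (star w)
        - U ⊗ₖ vecMulVec v (star w)
        - Uᴴ ⊗ₖ vecMulVec w (star v))) := by
  set c : ℂ := (Real.sqrt 2)⁻¹
  set P : Matrix (Fin N × Fin M) (Fin N × Fin M) ℂ :=
    (1 : Matrix (Fin N) (Fin N) ℂ) ⊗ₖ vecMulVec v (star v) - U ⊗ₖ vecMulVec v (star w)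
  have hc : star c * c = 1/2 := by
    simp only [c, star_inv₀, Complex.star_def, Complex.conj_ofReal]
    rw [← mul_inv, ← Complex.ofReal_mul, Real.mul_self_sqrt (by norm_num)]
    norm_num
  have key : (c • P)ᴴ * (c • P) = (1/2 : ℂ) •
      ((1 : Matrix (Fin N) (Fin N) ℂ) ⊗ₖ vecMulVec v (star v)
        + (1 : Matrix (Fin N) (Fin N) ℂ) ⊗ₖ vecMulVec w (star w)
        - U ⊗ₖ vecMulVec v (star w)
        - Uᴴ ⊗ₖ vecMulVec w (star v)) := by
    have hUU : Uᴴ * U = 1 := hU.1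
    rw [conjTranspose_smul, smul_mul_smul_comm, hc]
    congr 1
    simp only [P, conjTranspose_sub, sub_mul, mul_sub]
    have h1 : ((1 : Matrix (Fin N) (Fin N) ℂ) ⊗ₖ vecMulVec v (star v))ᴴ
        = (1 : Matrix (Fin N) (Fin N) ℂ) ⊗ₖ vecMulVec v (star v) := by
      rw [aux_kron_ct, conjTranspose_one, aux_vmv_ct, star_star]
    have h2 : (U ⊗ₖ vecMulVec v (star w))ᴴ = Uᴴ ⊗ₖ vecMulVec w (star v) := by
      rw [aux_kron_ct, aux_vmv_ct, star_star]
    rw [h1, h2]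
    have hwv : star w ⬝ᵥ v = 0 := by
      have h := congrArg star hvw
      rw [star_zero] at h
      rw [← h, dotProduct, dotProduct, star_sum]
      exact Finset.sum_congr rfl fun i _ => by simp [mul_comm]
    simp only [← mul_kronecker_mul, one_mul, mul_one, hUU,
      aux_vmv_mul, hv, hw, hvw, hwv]
    simp only [one_smul, zero_smul, kroneckerMap_zero_right]
    abel
  rw [← key]
  exact posSemidef_conjTranspose_mul_self _
end

section
/- With R = Σ_{t=0}^T (U_t⋯U_1) ⊗ |t⟩⟨t| and H_prop^t = (1/2)(I ⊗ |t⟩⟨t| + I ⊗ |t-1⟩⟨t-1| − U_t ⊗ |t⟩⟨t-1| − U_t† ⊗ |t-1⟩⟨t|) for 1 ≤ t ≤ T, one has R† H_prop^t R = (1/2) I ⊗ (|t⟩ − |t-1⟩)(⟨t| − ⟨t-1|). -/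
open Matrix Kronecker Finset

/-!
The operators `(W r)ᴴ ⊗ |r⟩⟨r|` and `W r ⊗ |r⟩⟨r|` making up `R†` and `R` each select a single
summand when multiplied against `A ⊗ |i⟩⟨j|`, so `R† (A ⊗ |i⟩⟨j|) R = (W i)ᴴ A W j ⊗ |i⟩⟨j|`.
Applied to the four terms of `H_prop^t`, the recursion `W t = U t W (t-1)` and unitarity of the
`W r` turn every operator factor into `I`.
-/

namespace Matrix

variable {α ι l m n p : Type*} [CommRing α]

theorem kronecker_sub (A : Matrix l m α) (B₁ B₂ : Matrix n p α) :
    A ⊗ₖ (B₁ - B₂) = A ⊗ₖ B₁ - A ⊗ₖ B₂ := by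
  ext
  simp [mul_sub]

variable [StarRing α]

theorem mem_unitaryGroup_of_succ_eq_mul [Fintype n] [DecidableEq n] {U W : ℕ → Matrix n n α}
    (hU : ∀ t, U t ∈ unitaryGroup n α) (hW0 : W 0 = 1) (hW : ∀ t, W (t + 1) = U (t + 1) * W t)
    (t : ℕ) : W t ∈ unitaryGroup n α := by
  induction t with
  | zero => exact hW0 ▸ one_mem _
  | succ t ih => exact hW t ▸ mul_mem (hU _) ih

theorem conjTranspose_sum_kronecker_vecMulVec (s : Finset ι) (e : ι → n → α)
    (V : ι → Matrix m m α) :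
    (∑ r ∈ s, V r ⊗ₖ vecMulVec (e r) (star (e r)))ᴴ
      = ∑ r ∈ s, (V r)ᴴ ⊗ₖ vecMulVec (e r) (star (e r)) := by
  simp only [conjTranspose_sum, conjTranspose_kronecker, conjTranspose_vecMulVec, star_star]

section Orthonormal

variable [Fintype n] [DecidableEq ι] {s : Finset ι} {e : ι → n → α}
  (he : ∀ i ∈ s, ∀ j ∈ s, star (e i) ⬝ᵥ e j = if i = j then 1 else 0)
include he

theorem sum_kronecker_vecMulVec_mul [Fintype m] (V : ι → Matrix l m α) (A : Matrix m p α)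
    (x : n → α) {i : ι} (hi : i ∈ s) :
    (∑ r ∈ s, V r ⊗ₖ vecMulVec (e r) (star (e r))) * (A ⊗ₖ vecMulVec (e i) x)
      = (V i * A) ⊗ₖ vecMulVec (e i) x := by
  have hsel : ∀ r ∈ s, (V r ⊗ₖ vecMulVec (e r) (star (e r))) * (A ⊗ₖ vecMulVec (e i) x)
      = if r = i then (V r * A) ⊗ₖ vecMulVec (e r) x else 0 := by
    intro r hr
    rw [← mul_kronecker_mul, vecMulVec_mul_vecMulVec, he r hr i hi]
    split_ifs <;> simp
  rw [Matrix.sum_mul, Finset.sum_congr rfl hsel, Finset.sum_ite_eq' s i, if_pos hi]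

theorem kronecker_vecMulVec_mul_sum [Fintype m] (A : Matrix l m α) (V : ι → Matrix m p α)
    (x : n → α) {j : ι} (hj : j ∈ s) :
    (A ⊗ₖ vecMulVec x (star (e j))) * (∑ r ∈ s, V r ⊗ₖ vecMulVec (e r) (star (e r)))
      = (A * V j) ⊗ₖ vecMulVec x (star (e j)) := by
  have hsel : ∀ r ∈ s, (A ⊗ₖ vecMulVec x (star (e j))) * (V r ⊗ₖ vecMulVec (e r) (star (e r)))
      = if j = r then (A * V r) ⊗ₖ vecMulVec x (star (e r)) else 0 := by
    intro r hr
    rw [← mul_kronecker_mul, vecMulVec_mul_vecMulVec, he j hj r hr]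
    split_ifs <;> simp
  rw [Matrix.mul_sum, Finset.sum_congr rfl hsel, Finset.sum_ite_eq s j, if_pos hj]

theorem conjTranspose_sum_kronecker_vecMulVec_mul_mul [Fintype m] (V : ι → Matrix m m α)
    (A : Matrix m m α) {i j : ι} (hi : i ∈ s) (hj : j ∈ s) :
    (∑ r ∈ s, V r ⊗ₖ vecMulVec (e r) (star (e r)))ᴴ * (A ⊗ₖ vecMulVec (e i) (star (e j)))
        * (∑ r ∈ s, V r ⊗ₖ vecMulVec (e r) (star (e r)))
      = ((V i)ᴴ * A * V j) ⊗ₖ vecMulVec (e i) (star (e j)) := by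
  rw [conjTranspose_sum_kronecker_vecMulVec, sum_kronecker_vecMulVec_mul he _ _ _ hi,
    kronecker_vecMulVec_mul_sum he _ _ _ hj]

end Orthonormal

end Matrix

/-- `R† H_prop^t R = (1/2) I ⊗ (|t⟩−|t-1⟩)(⟨t|−⟨t-1|)` for `1 ≤ t ≤ T`, where
`R = Σ_{t=0}^T (U_t⋯U_1) ⊗ |t⟩⟨t|` and `W t = U_t⋯U_1`. -/
theorem stmt3 (N T : ℕ) (U W : ℕ → Matrix (Fin N) (Fin N) ℂ)
    (hU : ∀ t, U t ∈ Matrix.unitaryGroup (Fin N) ℂ)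
    (hW0 : W 0 = 1) (hW : ∀ t, W (t + 1) = U (t + 1) * W t)
    (e : ℕ → Fin (T + 1) → ℂ)
    (he : ∀ i ≤ T, ∀ j ≤ T, star (e i) ⬝ᵥ e j = if i = j then 1 else 0)
    (t : ℕ) (ht1 : 1 ≤ t) (htT : t ≤ T) :
    (∑ r ∈ Finset.range (T + 1), (W r) ⊗ₖ vecMulVec (e r) (star (e r)))ᴴ
      * ((1/2 : ℂ) •
        ((1 : Matrix (Fin N) (Fin N) ℂ) ⊗ₖ vecMulVec (e t) (star (e t))
          + (1 : Matrix (Fin N) (Fin N) ℂ) ⊗ₖ vecMulVec (e (t-1)) (star (e (t-1)))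
          - U t ⊗ₖ vecMulVec (e t) (star (e (t-1)))
          - (U t)ᴴ ⊗ₖ vecMulVec (e (t-1)) (star (e t))))
      * (∑ r ∈ Finset.range (T + 1), (W r) ⊗ₖ vecMulVec (e r) (star (e r)))
    = (1/2 : ℂ) •
        ((1 : Matrix (Fin N) (Fin N) ℂ) ⊗ₖ
          vecMulVec (e t - e (t-1)) (star (e t - e (t-1)))) := by
  have hon : ∀ i ∈ range (T + 1), ∀ j ∈ range (T + 1),
      star (e i) ⬝ᵥ e j = if i = j then 1 else 0 := fun i hi j hj =>
    he i (mem_range_succ_iff.mp hi) j (mem_range_succ_iff.mp hj)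
  obtain ⟨k, rfl⟩ : ∃ k, t = k + 1 := ⟨t - 1, by omega⟩
  simp only [Nat.add_sub_cancel]
  have hmem_t : k + 1 ∈ range (T + 1) := mem_range_succ_iff.mpr htT
  have hmem_pred : k ∈ range (T + 1) := mem_range_succ_iff.mpr (by omega)
  have hWu : ∀ r, (W r)ᴴ * W r = 1 := fun r =>
    mem_unitaryGroup_iff'.mp (mem_unitaryGroup_of_succ_eq_mul hU hW0 hW r)
  have h_tt : (W (k + 1))ᴴ * 1 * W (k + 1) = 1 := by rw [mul_one, hWu]
  have h_pred : (W k)ᴴ * 1 * W k = 1 := by rw [mul_one, hWu]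
  have h_fwd : (W (k + 1))ᴴ * U (k + 1) * W k = 1 := by rw [mul_assoc, ← hW, hWu]
  have h_bwd : (W k)ᴴ * (U (k + 1))ᴴ * W (k + 1) = 1 := by
    rw [← conjTranspose_mul, ← hW, hWu]
  rw [Matrix.mul_smul, Matrix.smul_mul, mul_sub, mul_sub, mul_add, sub_mul, sub_mul, add_mul]
  simp only [conjTranspose_sum_kronecker_vecMulVec_mul_mul hon, hmem_t, hmem_pred,
    h_tt, h_pred, h_fwd, h_bwd]
  rw [star_sub, sub_vecMulVec, vecMulVec_sub, vecMulVec_sub, kronecker_sub, kronecker_sub,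
    kronecker_sub]
  abel_nf
end

section
/- Let H_prop = Σ_{t=1}^T H_prop^t with H_prop^t = (1/2)(I ⊗ |t⟩⟨t| + I ⊗ |t-1⟩⟨t-1| − U_t ⊗ |t⟩⟨t-1| − U_t† ⊗ |t-1⟩⟨t|). Then the kernel of H_prop is exactly the set of vectors of the form Σ_{t=0}^T (U_t⋯U_1 |χ⟩) ⊗ |t⟩ for |χ⟩ ∈ V, i.e., ker(H_prop) = R · (V ⊗ |unif⟩-span) where R = Σ_t (U_t⋯U_1) ⊗ |t⟩⟨t| and the span is of Σ_{t=0}^T |t⟩. -/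
/-!
Write `c t` for the clock components `(I ⊗ ⟨t|) ψ`. Since `U t` is unitary,
`⟨ψ, H_prop^t ψ⟩ = ½ ‖c t - U t c (t-1)‖²`, so `H_prop` is positive semidefinite and its kernel is
cut out by the recurrences `c t = U t c (t-1)`, i.e. `c t = U_t⋯U_1 c 0`. As the clock states form
a basis, `ψ = Σ_t c t ⊗ |t⟩`, which is then the history state of `c 0`.
-/

open Matrix Kronecker Finset
open scoped ComplexOrder

variable {m n R : Type*}

def tensorVec [Mul R] (x : m → R) (y : n → R) : m × n → R := fun p => x p.1 * y p.2

-- `(I ⊗ ⟨v|) ψ`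
def partialInner [Fintype n] [Mul R] [AddCommMonoid R] [Star R] (v : n → R) (ψ : m × n → R) :
    m → R :=
  fun k => star v ⬝ᵥ fun l => ψ (k, l)

section Algebra

variable [Fintype n] [CommSemiring R]

lemma kronecker_vecMulVec_mulVec [Fintype m] [Star R] (A : Matrix m m R) (u v : n → R)
    (ψ : m × n → R) :
    (A ⊗ₖ vecMulVec u (star v)) *ᵥ ψ = tensorVec (A *ᵥ partialInner v ψ) u := by
  ext ⟨i, j⟩
  simp only [mulVec, dotProduct, Fintype.sum_prod_type, kroneckerMap_apply, vecMulVec_apply,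
    Pi.star_apply, tensorVec, partialInner, mul_sum, sum_mul]
  exact sum_congr rfl fun k _ => sum_congr rfl fun l _ => by ring

lemma partialInner_tensorVec [Star R] (v u : n → R) (x : m → R) :
    partialInner v (tensorVec x u) = (star v ⬝ᵥ u) • x := by
  ext k
  simp only [partialInner, tensorVec, dotProduct, Pi.smul_apply, smul_eq_mul, sum_mul]
  exact sum_congr rfl fun l _ => by ring

lemma partialInner_sum [Star R] {ι : Type*} (s : Finset ι) (v : n → R) (f : ι → m × n → R) :
    partialInner v (∑ i ∈ s, f i) = ∑ i ∈ s, partialInner v (f i) := by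
  ext k
  simp only [partialInner, dotProduct, Finset.sum_apply, mul_sum]
  exact sum_comm

lemma star_dotProduct_tensorVec [Fintype m] [StarRing R] (ψ : m × n → R) (x : m → R)
    (u : n → R) : star ψ ⬝ᵥ tensorVec x u = star (partialInner u ψ) ⬝ᵥ x := by
  simp only [dotProduct, Fintype.sum_prod_type, Pi.star_apply, tensorVec, partialInner,
    star_sum, star_mul', star_star, sum_mul]
  exact sum_congr rfl fun k _ => sum_congr rfl fun l _ => by ring

end Algebra

section Propagation

variable [Fintype m] [DecidableEq m] [Fintype n]

-- `H_prop^t = propagationTerm (U t) (e (t - 1)) (e t)`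
noncomputable def propagationTerm (U : Matrix m m ℂ) (u v : n → ℂ) : Matrix (m × n) (m × n) ℂ :=
  (1/2 : ℂ) • ((1 : Matrix m m ℂ) ⊗ₖ vecMulVec v (star v)
    + (1 : Matrix m m ℂ) ⊗ₖ vecMulVec u (star u)
    - U ⊗ₖ vecMulVec v (star u) - Uᴴ ⊗ₖ vecMulVec u (star v))

lemma propagationTerm_mulVec {U : Matrix m m ℂ} (hU : Uᴴ * U = 1) (u v : n → ℂ)
    (ψ : m × n → ℂ) :
    propagationTerm U u v *ᵥ ψ = (1/2 : ℂ) •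
      (tensorVec (partialInner v ψ - U *ᵥ partialInner u ψ) v
        - tensorVec (Uᴴ *ᵥ (partialInner v ψ - U *ᵥ partialInner u ψ)) u) := by
  rw [propagationTerm, smul_mulVec, sub_mulVec, sub_mulVec, add_mulVec,
    kronecker_vecMulVec_mulVec, kronecker_vecMulVec_mulVec, kronecker_vecMulVec_mulVec,
    kronecker_vecMulVec_mulVec, one_mulVec, one_mulVec, mulVec_sub, mulVec_mulVec, hU,
    one_mulVec]
  ext p
  simp only [tensorVec, Pi.smul_apply, Pi.sub_apply, Pi.add_apply, smul_eq_mul]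
  ring

lemma star_dotProduct_propagationTerm_mulVec {U : Matrix m m ℂ} (hU : Uᴴ * U = 1)
    (u v : n → ℂ) (ψ : m × n → ℂ) :
    star ψ ⬝ᵥ (propagationTerm U u v *ᵥ ψ) = (1/2 : ℂ) *
      (star (partialInner v ψ - U *ᵥ partialInner u ψ) ⬝ᵥ
        (partialInner v ψ - U *ᵥ partialInner u ψ)) := by
  rw [propagationTerm_mulVec hU, dotProduct_smul, dotProduct_sub, star_dotProduct_tensorVec,
    star_dotProduct_tensorVec, dotProduct_mulVec, ← star_mulVec, ← sub_dotProduct, ← star_sub,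
    smul_eq_mul]

lemma sum_propagationTerm_mulVec_eq_zero_iff {ι : Type*} {s : Finset ι} {U : ι → Matrix m m ℂ}
    (hU : ∀ i ∈ s, (U i)ᴴ * U i = 1) (u v : ι → n → ℂ) (ψ : m × n → ℂ) :
    (∑ i ∈ s, propagationTerm (U i) (u i) (v i)) *ᵥ ψ = 0 ↔
      ∀ i ∈ s, partialInner (v i) ψ = U i *ᵥ partialInner (u i) ψ := by
  simp_rw [← sub_eq_zero (a := partialInner (v _) ψ), sum_mulVec]
  constructor
  · intro h
    have hsum : ∑ i ∈ s, star (partialInner (v i) ψ - U i *ᵥ partialInner (u i) ψ) ⬝ᵥ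
        (partialInner (v i) ψ - U i *ᵥ partialInner (u i) ψ) = 0 := by
      have := congrArg (star ψ ⬝ᵥ ·) h
      simp only [dotProduct_sum, dotProduct_zero] at this
      rw [sum_congr rfl fun i hi => star_dotProduct_propagationTerm_mulVec (hU i hi) _ _ ψ,
        ← mul_sum] at this
      simpa using this
    rw [sum_eq_zero_iff_of_nonneg fun i _ => dotProduct_star_self_nonneg _] at hsum
    exact fun i hi => dotProduct_star_self_eq_zero.mp (hsum i hi)
  · intro h
    refine sum_eq_zero fun i hi => ?_
    rw [propagationTerm_mulVec (hU i hi), h i hi]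
    ext p
    simp [tensorVec]

end Propagation

section Orthonormal

variable [Fintype n] [DecidableEq n] [CommRing R] [StarRing R]

lemma sum_star_mul_eq_ite_of_orthonormal {e : n → n → R}
    (he : ∀ i j, star (e i) ⬝ᵥ e j = if i = j then 1 else 0) (k l : n) :
    ∑ i, star (e i k) * e i l = if k = l then 1 else 0 := by
  have hE : Matrix.of e ∈ unitaryGroup n R := by
    refine mem_unitaryGroup_iff.mpr (ext fun i j => ?_)
    simpa [dotProduct, mul_apply, one_apply, mul_comm, eq_comm (a := j)] using he j i
  simpa [mul_apply, one_apply] using congrFun₂ (mem_unitaryGroup_iff'.mp hE) k l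

lemma sum_tensorVec_partialInner {e : n → n → R}
    (he : ∀ i j, star (e i) ⬝ᵥ e j = if i = j then 1 else 0) (ψ : m × n → R) :
    ∑ i, tensorVec (partialInner (e i) ψ) (e i) = ψ := by
  ext ⟨k, l⟩
  simp only [Finset.sum_apply, tensorVec, partialInner, dotProduct, Pi.star_apply]
  calc ∑ i, (∑ j, star (e i j) * ψ (k, j)) * e i l
      = ∑ j, ψ (k, j) * ∑ i, star (e i j) * e i l := by
        simp only [sum_mul, mul_sum]
        rw [sum_comm]
        exact sum_congr rfl fun j _ => sum_congr rfl fun i _ => by ring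
    _ = ψ (k, l) := by simp [sum_star_mul_eq_ite_of_orthonormal he]

end Orthonormal

lemma forall_eq_mulVec_pred_iff [Semiring R] [Fintype m] [DecidableEq m] {T : ℕ}
    {U W : ℕ → Matrix m m R}
    (hW0 : W 0 = 1) (hW : ∀ t, W (t + 1) = U (t + 1) * W t) (c : ℕ → m → R) :
    (∀ t ∈ Icc 1 T, c t = U t *ᵥ c (t - 1)) ↔ ∀ t ≤ T, c t = W t *ᵥ c 0 := by
  constructor
  · intro h t ht
    induction t with
    | zero => rw [hW0, one_mulVec]
    | succ t ih =>
      rw [h (t + 1) (mem_Icc.mpr ⟨by omega, ht⟩), Nat.add_sub_cancel, ih (by omega), hW,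
        mulVec_mulVec]
  · rintro h (_ | t) ht
    · simp at ht
    · rw [mem_Icc] at ht
      rw [Nat.add_sub_cancel, h (t + 1) ht.2, h t (by omega), hW, mulVec_mulVec]

section History

variable [CommRing R] [StarRing R] {T : ℕ}

lemma sum_range_tensorVec_partialInner {e : ℕ → Fin (T + 1) → R}
    (he : ∀ i ≤ T, ∀ j ≤ T, star (e i) ⬝ᵥ e j = if i = j then 1 else 0)
    (ψ : m × Fin (T + 1) → R) :
    ∑ t ∈ range (T + 1), tensorVec (partialInner (e t) ψ) (e t) = ψ := by
  rw [sum_range]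
  refine sum_tensorVec_partialInner (fun i j => ?_) ψ
  simp only [he i i.is_le j j.is_le, Fin.val_inj]

lemma partialInner_sum_range_tensorVec [Fintype n] {e : ℕ → n → R}
    (he : ∀ i ≤ T, ∀ j ≤ T, star (e i) ⬝ᵥ e j = if i = j then 1 else 0) (x : ℕ → m → R)
    {t : ℕ} (ht : t ≤ T) :
    partialInner (e t) (∑ s ∈ range (T + 1), tensorVec (x s) (e s)) = x t := by
  rw [partialInner_sum, sum_congr rfl fun s hs => by
    rw [partialInner_tensorVec, he t ht s (mem_range_succ_iff.mp hs)]]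
  simp [ht]

lemma exists_eq_sum_range_tensorVec_iff [Fintype m] [DecidableEq m]
    {e : ℕ → Fin (T + 1) → R}
    (he : ∀ i ≤ T, ∀ j ≤ T, star (e i) ⬝ᵥ e j = if i = j then 1 else 0)
    {W : ℕ → Matrix m m R} (hW0 : W 0 = 1) (ψ : m × Fin (T + 1) → R) :
    (∃ χ, ψ = ∑ t ∈ range (T + 1), tensorVec (W t *ᵥ χ) (e t)) ↔
      ∀ t ≤ T, partialInner (e t) ψ = W t *ᵥ partialInner (e 0) ψ := by
  constructor
  · rintro ⟨χ, rfl⟩ t ht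
    rw [partialInner_sum_range_tensorVec he _ ht,
      partialInner_sum_range_tensorVec he _ T.zero_le, hW0, one_mulVec]
  · intro h
    refine ⟨partialInner (e 0) ψ, ?_⟩
    conv_lhs => rw [← sum_range_tensorVec_partialInner he ψ]
    exact sum_congr rfl fun t ht => by rw [h t (mem_range_succ_iff.mp ht)]

end History

/-- The kernel of `H_prop = Σ_{t=1}^T H_prop^t` consists exactly of the history
states `Σ_{t=0}^T (U_t⋯U_1 |χ⟩) ⊗ |t⟩`, `|χ⟩ ∈ V`.  Here `W t = U_t⋯U_1` and
`e 0, …, e T` is an orthonormal basis of the clock space `ℂ^{T+1}`. -/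
theorem stmt5 (N T : ℕ) (U W : ℕ → Matrix (Fin N) (Fin N) ℂ)
    (hU : ∀ t, U t ∈ Matrix.unitaryGroup (Fin N) ℂ)
    (hW0 : W 0 = 1) (hW : ∀ t, W (t + 1) = U (t + 1) * W t)
    (e : ℕ → Fin (T + 1) → ℂ)
    (he : ∀ i ≤ T, ∀ j ≤ T, star (e i) ⬝ᵥ e j = if i = j then 1 else 0)
    (ψ : Fin N × Fin (T + 1) → ℂ) :
    (∑ t ∈ Finset.Icc 1 T, (1/2 : ℂ) •
        ((1 : Matrix (Fin N) (Fin N) ℂ) ⊗ₖ vecMulVec (e t) (star (e t))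
          + (1 : Matrix (Fin N) (Fin N) ℂ) ⊗ₖ vecMulVec (e (t-1)) (star (e (t-1)))
          - U t ⊗ₖ vecMulVec (e t) (star (e (t-1)))
          - (U t)ᴴ ⊗ₖ vecMulVec (e (t-1)) (star (e t)))) *ᵥ ψ = 0
    ↔ ∃ χ : Fin N → ℂ,
        ψ = ∑ t ∈ Finset.range (T + 1),
          fun p : Fin N × Fin (T + 1) => (W t *ᵥ χ) p.1 * e t p.2 := by
  have hUU : ∀ t ∈ Icc 1 T, (U t)ᴴ * U t = 1 := fun t _ => mem_unitaryGroup_iff'.mp (hU t)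
  change (∑ t ∈ Icc 1 T, propagationTerm (U t) (e (t - 1)) (e t)) *ᵥ ψ = 0 ↔
    ∃ χ, ψ = ∑ t ∈ range (T + 1), tensorVec (W t *ᵥ χ) (e t)
  rw [sum_propagationTerm_mulVec_eq_zero_iff hUU, forall_eq_mulVec_pred_iff hW0 hW,
    exists_eq_sum_range_tensorVec_iff he hW0]
end

section
/- Let E = Σ_{t=1}^T (1/2)(|t⟩−|t-1⟩)(⟨t|−⟨t-1|) acting on the clock space C with orthonormal basis |0⟩,…,|T⟩. Then the smallest nonzero eigenvalue of E is 1 − cos(π/(T+1)). -/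
/-!
For `k = 0, …, T` the sampled cosines `u_k(j) = cos (π k (j + 1/2) / (T + 1))` are eigenvectors
of `E` with eigenvalues `1 - cos (π k / (T + 1))`. In the interior this is the second-difference
identity for cosines; at the two ends the reflections `u_k(-1) = u_k(0)` and
`u_k(T + 1) = u_k(T)` make the boundary rows of `E` follow the same formula. Since `cos` is
strictly decreasing on `[0, π]`, these `T + 1` eigenvalues are distinct, so they exhaust the
spectrum of `E`, and the least nonzero one is the one with `k = 1`.
-/

open Matrix Finset Real

theorem Module.End.HasEigenvector.mem_range_of_card_eq_finrank {K V ι : Type*} [Field K]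
    [AddCommGroup V] [Module K V] [FiniteDimensional K V] [Fintype ι] {f : End K V}
    {μs : ι → K} (hμs : Function.Injective μs) (hcard : Fintype.card ι = finrank K V)
    {xs : ι → V} (hxs : ∀ i, f.HasEigenvector (μs i) (xs i)) {μ : K} {x : V}
    (hx : f.HasEigenvector μ x) : μ ∈ Set.range μs := by
  by_contra hμ
  have hinj : Function.Injective fun o : Option ι => o.elim μ μs := by
    rintro (_ | i) (_ | j) h
    · rfl
    · exact (hμ ⟨j, h.symm⟩).elim
    · exact (hμ ⟨i, h⟩).elim
    · exact congrArg some (hμs h)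
  have hli := f.eigenvectors_linearIndependent' _ hinj (fun o => o.elim x xs)
    (by rintro (_ | i); exacts [hx, hxs i])
  have hle := hli.fintype_card_le_finrank
  rw [Fintype.card_option, hcard] at hle
  omega

noncomputable def cosMode (θ x : ℝ) : ℝ := cos (θ * (x + 1 / 2))

theorem cosMode_neg_one (θ : ℝ) : cosMode θ (-1) = cosMode θ 0 := by
  rw [cosMode, cosMode, ← cos_neg]
  ring_nf

theorem cosMode_reflect {θ : ℝ} {T k : ℕ} (hθ : θ * (T + 1) = k * π) :
    cosMode θ (T + 1) = cosMode θ T := by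
  have h₁ : θ * ((T + 1 : ℝ) + 1 / 2) = k * π + θ / 2 := by linear_combination hθ
  have h₂ : θ * ((T : ℝ) + 1 / 2) = k * π - θ / 2 := by linear_combination hθ
  rw [cosMode, cosMode, h₁, h₂, cos_add, cos_sub, sin_nat_mul_pi]
  ring

theorem cosMode_sub_avg (θ x : ℝ) :
    cosMode θ x - (cosMode θ (x - 1) + cosMode θ (x + 1)) / 2 = (1 - cos θ) * cosMode θ x := by
  have h₁ : θ * (x - 1 + 1 / 2) = θ * (x + 1 / 2) - θ := by ring
  have h₂ : θ * (x + 1 + 1 / 2) = θ * (x + 1 / 2) + θ := by ring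
  rw [cosMode, cosMode, cosMode, h₁, h₂, cos_add, cos_sub]
  ring

theorem cosMode_zero_pos {θ : ℝ} (h₀ : 0 ≤ θ) (hπ : θ < π) : 0 < cosMode θ 0 := by
  rw [cosMode]
  apply cos_pos_of_mem_Ioo
  constructor <;> linarith

section HalfLaplacian

variable {T : ℕ} {b : ℕ → Fin (T + 1) → ℂ} {E : Matrix (Fin (T + 1)) (Fin (T + 1)) ℂ}

theorem star_basis_dotProduct
    (hb : ∀ k ≤ T, b k = fun i : Fin (T + 1) => if (i : ℕ) = k then (1 : ℂ) else 0)
    {t : ℕ} (ht : t ≤ T) (U : ℝ → ℂ) : star (b t) ⬝ᵥ (fun j => U j) = U t := by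
  simp only [hb t ht, dotProduct, Pi.star_apply]
  rw [Fin.sum_univ_eq_sum_range (fun j => star (if j = t then (1 : ℂ) else 0) * U j)]
  simp [ht]

theorem halfLaplacian_mulVec
    (hb : ∀ k ≤ T, b k = fun i : Fin (T + 1) => if (i : ℕ) = k then (1 : ℂ) else 0)
    (hE : E = ∑ t ∈ Finset.Icc 1 T,
        (1/2 : ℂ) • vecMulVec (b t - b (t-1)) (star (b t - b (t-1)))) (U : ℝ → ℂ) :
    E *ᵥ (fun j => U j) = ∑ t ∈ Icc 1 T, ((U t - U (t - 1)) / 2) • (b t - b (t - 1)) := by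
  rw [hE, sum_mulVec]
  refine sum_congr rfl fun t ht => ?_
  rw [mem_Icc] at ht
  rw [smul_mulVec, vecMulVec_mulVec, op_smul_eq_smul, smul_smul, star_sub, sub_dotProduct,
    star_basis_dotProduct hb ht.2, star_basis_dotProduct hb (by omega), Nat.cast_sub ht.1]
  push_cast
  ring_nf

theorem halfLaplacian_mulVec_apply
    (hb : ∀ k ≤ T, b k = fun i : Fin (T + 1) => if (i : ℕ) = k then (1 : ℂ) else 0)
    (hE : E = ∑ t ∈ Finset.Icc 1 T,
        (1/2 : ℂ) • vecMulVec (b t - b (t-1)) (star (b t - b (t-1))))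
    {U : ℝ → ℂ} (hU₀ : U (-1) = U 0) (hU : U (T + 1) = U T) (i : Fin (T + 1)) :
    (E *ᵥ fun j => U j) i = U i - (U (i - 1) + U (i + 1)) / 2 := by
  have hi := i.is_le
  have hcomp : ∀ t ∈ Icc 1 T, (((U t - U (t - 1)) / 2) • (b t - b (t - 1))) i =
      (if (i : ℕ) = t then (U t - U (t - 1)) / 2 else 0) -
        (if (i : ℕ) + 1 = t then (U t - U (t - 1)) / 2 else 0) := by
    intro t ht
    rw [mem_Icc] at ht
    rw [hb t ht.2, hb (t - 1) (by omega)]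
    simp only [Pi.smul_apply, Pi.sub_apply, smul_eq_mul]
    have : ((i : ℕ) = t - 1) ↔ ((i : ℕ) + 1 = t) := by omega
    simp only [this]
    split_ifs <;> ring
  rw [halfLaplacian_mulVec hb hE, Finset.sum_apply, sum_congr rfl hcomp, sum_sub_distrib,
    sum_ite_eq, sum_ite_eq]
  push_cast
  simp only [mem_Icc, add_sub_cancel_right]
  split_ifs with h₁ h₂ h₂
  · ring
  · have h : ((i : ℕ) : ℝ) = T := by exact_mod_cast (by omega : (i : ℕ) = T)
    rw [h, hU]
    ring
  · have h : (i : ℕ) = 0 := by omega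
    simp only [h, Nat.cast_zero, zero_sub, zero_add, hU₀]
    ring
  · have h : (i : ℕ) = 0 := by omega
    obtain rfl : T = 0 := by omega
    simp only [Nat.cast_zero, zero_add] at hU
    simp only [h, Nat.cast_zero, zero_sub, zero_add, hU₀, hU]
    ring

noncomputable def pathEigenvalue (T k : ℕ) : ℝ := 1 - cos (π * k / (T + 1))

noncomputable def pathEigenvector (T k : ℕ) : Fin (T + 1) → ℂ :=
  fun j => (cosMode (π * k / (T + 1)) j : ℂ)

theorem halfLaplacian_mulVec_pathEigenvector
    (hb : ∀ k ≤ T, b k = fun i : Fin (T + 1) => if (i : ℕ) = k then (1 : ℂ) else 0)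
    (hE : E = ∑ t ∈ Finset.Icc 1 T,
        (1/2 : ℂ) • vecMulVec (b t - b (t-1)) (star (b t - b (t-1)))) (k : ℕ) :
    E *ᵥ pathEigenvector T k = (pathEigenvalue T k : ℂ) • pathEigenvector T k := by
  have hθ : π * k / (T + 1) * (T + 1) = k * π := by field_simp
  ext i
  unfold pathEigenvector
  rw [halfLaplacian_mulVec_apply hb hE (U := fun x => (cosMode (π * k / (T + 1)) x : ℂ))
    (by rw [cosMode_neg_one])
    (by rw [cosMode_reflect hθ]), Pi.smul_apply, smul_eq_mul, pathEigenvalue]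
  exact_mod_cast cosMode_sub_avg _ i

end HalfLaplacian

theorem pathEigenvector_ne_zero {T k : ℕ} (hk : k ≤ T) : pathEigenvector T k ≠ 0 := by
  intro h
  have h₀ : cosMode (π * k / (T + 1)) 0 = 0 := by simpa [pathEigenvector] using congrFun h 0
  refine (cosMode_zero_pos (by positivity) ?_).ne' h₀
  rw [div_lt_iff₀ (by positivity)]
  have : (k : ℝ) < T + 1 := by exact_mod_cast Nat.lt_succ_of_le hk
  nlinarith [pi_pos]

theorem strictMono_pathEigenvalue (T : ℕ) :
    StrictMono fun k : Fin (T + 1) => pathEigenvalue T k := by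
  intro k l hkl
  have hmem : ∀ j : Fin (T + 1), π * j / (T + 1) ∈ Set.Icc 0 π := fun j => by
    have : (j : ℝ) ≤ T + 1 := by exact_mod_cast j.is_lt.le
    refine ⟨by positivity, ?_⟩
    rw [div_le_iff₀ (by positivity)]
    nlinarith [pi_pos]
  have hlt : π * k / (T + 1) < π * l / (T + 1) := by
    gcongr
    exact_mod_cast hkl
  simpa [pathEigenvalue] using strictAntiOn_cos (hmem k) (hmem l) hlt

/-- The smallest nonzero eigenvalue of the (half) path-graph Laplacian
`E = Σ_{t=1}^T (1/2)(|t⟩−|t-1⟩)(⟨t|−⟨t-1|)` on `ℂ^{T+1}` is `1 − cos(π/(T+1))`: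
it is an eigenvalue, and every nonzero eigenvalue is at least this value. -/
theorem stmt6 (T : ℕ) (hT : 1 ≤ T)
    (b : ℕ → Fin (T + 1) → ℂ)
    (hb : ∀ k ≤ T, b k = fun i : Fin (T + 1) => if (i : ℕ) = k then (1 : ℂ) else 0)
    (E : Matrix (Fin (T + 1)) (Fin (T + 1)) ℂ)
    (hE : E = ∑ t ∈ Finset.Icc 1 T,
        (1/2 : ℂ) • vecMulVec (b t - b (t-1)) (star (b t - b (t-1)))) :
    (∃ v : Fin (T + 1) → ℂ, v ≠ 0 ∧
        E *ᵥ v = ((1 - Real.cos (π / (T + 1)) : ℝ) : ℂ) • v) ∧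
    (∀ (μ : ℝ) (v : Fin (T + 1) → ℂ), v ≠ 0 → E *ᵥ v = (μ : ℂ) • v →
        μ = 0 ∨ 1 - Real.cos (π / (T + 1)) ≤ μ) := by
  have heigenvalue_one : pathEigenvalue T 1 = 1 - cos (π / (T + 1)) := by simp [pathEigenvalue]
  have hvec : ∀ k : Fin (T + 1),
      Module.End.HasEigenvector (toLin' E) (pathEigenvalue T k) (pathEigenvector T k) :=
    fun k => ⟨Module.End.mem_eigenspace_iff.2 (halfLaplacian_mulVec_pathEigenvector hb hE k),
      pathEigenvector_ne_zero k.is_le⟩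
  refine ⟨⟨pathEigenvector T 1, pathEigenvector_ne_zero hT, ?_⟩, fun μ v hv hEv => ?_⟩
  · rw [← heigenvalue_one]
    exact halfLaplacian_mulVec_pathEigenvector hb hE 1
  obtain ⟨k, hk⟩ := Module.End.HasEigenvector.mem_range_of_card_eq_finrank (f := toLin' E)
    (μs := fun k : Fin (T + 1) => (pathEigenvalue T k : ℂ))
    (Complex.ofReal_injective.comp (strictMono_pathEigenvalue T).injective) (by simp) hvec
    ⟨Module.End.mem_eigenspace_iff.2 hEv, hv⟩
  replace hk : pathEigenvalue T k = μ := Complex.ofReal_injective hk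
  rcases Nat.eq_zero_or_pos k with hk₀ | hk₁
  · left
    simp [← hk, pathEigenvalue, hk₀]
  · right
    rw [← heigenvalue_one, ← hk]
    exact (strictMono_pathEigenvalue T).monotone (a := ⟨1, by omega⟩) hk₁
end

section
/- Let A and B be positive semidefinite Hermitian operators on a finite-dimensional complex Hilbert space with ker(A) ∩ ker(B) = {0}. Then A + B has a positive smallest eigenvalue; quantitatively, if Π_A, Π_B denote the orthogonal projections onto ker(A) and ker(B), and a, b are the smallest nonzero eigenvalues of A and B respectively, then the smallest eigenvalue of A + B is at least min(a,b) · (1 − cos θ), where cos θ = max{|⟨u,v⟩| : u ∈ ker(A), v ∈ ker(B), ‖u‖ = ‖v‖ = 1}. -/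
/-!
Write `P`, `Q` for the orthogonal projections onto `ker A`, `ker B` and `c = cos θ`. Expanding a
unit vector `ψ` in an eigenbasis of `A` gives `⟪ψ, A ψ⟫ ≥ a (1 - ‖P ψ‖²)`, and likewise for `B`.
For `x = P ψ + Q ψ` we have `⟪x, ψ⟫ = ‖P ψ‖² + ‖Q ψ‖² =: s` and
`‖x‖² ≤ s + 2c ‖P ψ‖ ‖Q ψ‖ ≤ (1 + c) s`, so Cauchy–Schwarz gives `s² ≤ (1 + c) s`, i.e.
`s ≤ 1 + c`. Adding the two spectral bounds, `⟪ψ, (A + B) ψ⟫ ≥ min a b (2 - s) ≥ min a b (1 - c)`.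
Positivity holds because a vanishing quadratic form of a positive semidefinite matrix forces `ψ`
into its kernel.
-/

open Matrix ComplexOrder RCLike Module.End
open scoped InnerProductSpace

namespace Submodule

variable {𝕜 E : Type*} [RCLike 𝕜] [NormedAddCommGroup E] [InnerProductSpace 𝕜 E]

/-- Since `sSup ∅ = 0`, this is `0` when `K` or `L` is trivial. -/
noncomputable def cosAngle (K L : Submodule 𝕜 E) : ℝ :=
  sSup {r | ∃ u ∈ K, ∃ v ∈ L, ‖u‖ = 1 ∧ ‖v‖ = 1 ∧ ‖⟪u, v⟫_𝕜‖ = r}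

variable (K L : Submodule 𝕜 E)

theorem cosAngle_nonneg : 0 ≤ K.cosAngle L :=
  Real.sSup_nonneg <| by rintro _ ⟨u, -, v, -, -, -, rfl⟩; positivity

theorem norm_inner_le_cosAngle_mul_norm_mul_norm {u v : E} (hu : u ∈ K) (hv : v ∈ L) :
    ‖⟪u, v⟫_𝕜‖ ≤ K.cosAngle L * ‖u‖ * ‖v‖ := by
  rcases eq_or_ne u 0 with rfl | hu0
  · simp
  rcases eq_or_ne v 0 with rfl | hv0
  · simp
  have hbdd : BddAbove {r | ∃ u ∈ K, ∃ v ∈ L, ‖u‖ = 1 ∧ ‖v‖ = 1 ∧ ‖⟪u, v⟫_𝕜‖ = r} := by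
    refine ⟨1, ?_⟩
    rintro _ ⟨u, -, v, -, hu1, hv1, rfl⟩
    simpa [hu1, hv1] using norm_inner_le_norm (𝕜 := 𝕜) u v
  have hunit : ‖⟪(‖u‖⁻¹ : 𝕜) • u, (‖v‖⁻¹ : 𝕜) • v⟫_𝕜‖ ≤ K.cosAngle L :=
    le_csSup hbdd ⟨_, K.smul_mem _ hu, _, L.smul_mem _ hv, norm_smul_inv_norm hu0,
      norm_smul_inv_norm hv0, rfl⟩
  have hpos : 0 < ‖u‖ * ‖v‖ := by positivity
  rw [inner_smul_left, inner_smul_right, norm_mul, norm_mul, RCLike.norm_conj,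
    norm_inv, norm_inv, RCLike.norm_ofReal, RCLike.norm_ofReal, abs_norm, abs_norm] at hunit
  rw [mul_assoc, ← div_le_iff₀ hpos]
  calc ‖⟪u, v⟫_𝕜‖ / (‖u‖ * ‖v‖) = ‖u‖⁻¹ * (‖v‖⁻¹ * ‖⟪u, v⟫_𝕜‖) := by field_simp
    _ ≤ _ := hunit

theorem norm_sq_starProjection_add_norm_sq_starProjection_le
    [K.HasOrthogonalProjection] [L.HasOrthogonalProjection] (x : E) :
    ‖K.starProjection x‖ ^ 2 + ‖L.starProjection x‖ ^ 2 ≤ (1 + K.cosAngle L) * ‖x‖ ^ 2 := by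
  set p := K.starProjection x
  set q := L.starProjection x
  set s := ‖p‖ ^ 2 + ‖q‖ ^ 2
  set c := K.cosAngle L
  have hc : 0 ≤ c := K.cosAngle_nonneg L
  have hpq : re ⟪p, q⟫_𝕜 ≤ c * ‖p‖ * ‖q‖ :=
    (re_le_norm _).trans <| K.norm_inner_le_cosAngle_mul_norm_mul_norm L
      (K.starProjection_apply_mem x) (L.starProjection_apply_mem x)
  have hsum : ‖p + q‖ ^ 2 ≤ (1 + c) * s := by
    rw [@norm_add_sq 𝕜]
    nlinarith [mul_nonneg hc (sq_nonneg (‖p‖ - ‖q‖))]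
  have hinner : s = re ⟪p + q, x⟫_𝕜 := by
    rw [inner_add_left, map_add, re_inner_starProjection_eq_normSq,
      re_inner_starProjection_eq_normSq]
    rfl
  have hcs : s ≤ ‖p + q‖ * ‖x‖ := hinner ▸ re_inner_le_norm _ _
  have hs : 0 ≤ s := by positivity
  have hsq : s * s ≤ s * ((1 + c) * ‖x‖ ^ 2) :=
    calc s * s ≤ ‖p + q‖ ^ 2 * ‖x‖ ^ 2 := by rw [← mul_pow, sq]; gcongr
      _ ≤ (1 + c) * s * ‖x‖ ^ 2 := by gcongr
      _ = s * ((1 + c) * ‖x‖ ^ 2) := by ring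
  rcases hs.eq_or_lt with hs0 | hs0
  · rw [← hs0]; positivity
  · exact le_of_mul_le_mul_left hsq hs0

end Submodule

namespace LinearMap.IsSymmetric

variable {𝕜 E : Type*} [RCLike 𝕜] [NormedAddCommGroup E] [InnerProductSpace 𝕜 E]
  [FiniteDimensional 𝕜 E] {T : E →ₗ[𝕜] E}

theorem mul_norm_sq_le_re_inner_of_mem_orthogonal_ker (hT : T.IsSymmetric) {a : ℝ}
    (hgap : ∀ μ : ℝ, HasEigenvalue T μ → μ = 0 ∨ a ≤ μ) {x : E} (hx : x ∈ (ker T)ᗮ) :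
    a * ‖x‖ ^ 2 ≤ re ⟪x, T x⟫_𝕜 := by
  set e := hT.eigenvectorBasis rfl
  set ev := hT.eigenvalues rfl
  have hquad : re ⟪x, T x⟫_𝕜 = ∑ i, ev i * ‖⟪e i, x⟫_𝕜‖ ^ 2 := by
    rw [← e.sum_inner_mul_inner x (T x), map_sum]
    refine Finset.sum_congr rfl fun i _ => ?_
    rw [← hT, hT.apply_eigenvectorBasis, inner_smul_left, conj_ofReal, ← inner_conj_symm x,
      mul_left_comm, RCLike.conj_mul, ← ofReal_pow, ← ofReal_mul, ofReal_re]
  have hterm : ∀ i, a * ‖⟪e i, x⟫_𝕜‖ ^ 2 ≤ ev i * ‖⟪e i, x⟫_𝕜‖ ^ 2 := by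
    intro i
    rcases hgap _ (hT.hasEigenvalue_eigenvalues rfl i) with h | h
    · have hker : e i ∈ ker T := by simp [e, hT.apply_eigenvectorBasis, h]
      simp [(Submodule.mem_orthogonal _ _).mp hx _ hker]
    · gcongr
  calc a * ‖x‖ ^ 2 = ∑ i, a * ‖⟪e i, x⟫_𝕜‖ ^ 2 := by
        rw [← e.sum_sq_norm_inner_right, Finset.mul_sum]
    _ ≤ _ := Finset.sum_le_sum fun i _ => hterm i
    _ = _ := hquad.symm

theorem mul_sub_norm_sq_starProjection_ker_le_re_inner (hT : T.IsSymmetric) {a : ℝ}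
    (hgap : ∀ μ : ℝ, HasEigenvalue T μ → μ = 0 ∨ a ≤ μ) (x : E) :
    a * (‖x‖ ^ 2 - ‖(ker T).starProjection x‖ ^ 2) ≤ re ⟪x, T x⟫_𝕜 := by
  set r := (ker T)ᗮ.starProjection x
  have hx : (ker T).starProjection x + r = x :=
    (ker T).starProjection_add_starProjection_orthogonal x
  have hker : T ((ker T).starProjection x) = 0 := mem_ker.mp ((ker T).starProjection_apply_mem x)
  have hquad : ⟪x, T x⟫_𝕜 = ⟪r, T r⟫_𝕜 := by
    rw [← hx, map_add, hker, zero_add, inner_add_left, ← hT, hker, inner_zero_left, zero_add]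
  rw [(ker T).norm_sq_eq_add_norm_sq_starProjection x, add_sub_cancel_left, hquad]
  exact hT.mul_norm_sq_le_re_inner_of_mem_orthogonal_ker hgap ((ker T)ᗮ.starProjection_apply_mem x)

theorem min_mul_one_sub_cosAngle_mul_norm_sq_le_re_inner_add (hT : T.IsSymmetric)
    {S : E →ₗ[𝕜] E} (hS : S.IsSymmetric) {a b : ℝ} (ha : 0 ≤ a) (hb : 0 ≤ b)
    (hTa : ∀ μ : ℝ, HasEigenvalue T μ → μ = 0 ∨ a ≤ μ)
    (hSb : ∀ μ : ℝ, HasEigenvalue S μ → μ = 0 ∨ b ≤ μ) (x : E) :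
    min a b * (1 - (ker T).cosAngle (ker S)) * ‖x‖ ^ 2 ≤ re ⟪x, (T + S) x⟫_𝕜 := by
  have hT' := hT.mul_sub_norm_sq_starProjection_ker_le_re_inner hTa x
  have hS' := hS.mul_sub_norm_sq_starProjection_ker_le_re_inner hSb x
  have hpT : 0 ≤ ‖x‖ ^ 2 - ‖(ker T).starProjection x‖ ^ 2 :=
    sub_nonneg.mpr (by gcongr; exact (ker T).norm_starProjection_apply_le x)
  have hpS : 0 ≤ ‖x‖ ^ 2 - ‖(ker S).starProjection x‖ ^ 2 :=
    sub_nonneg.mpr (by gcongr; exact (ker S).norm_starProjection_apply_le x)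
  have hangle := (ker T).norm_sq_starProjection_add_norm_sq_starProjection_le (ker S) x
  have hm : 0 ≤ min a b := le_min ha hb
  rw [add_apply, inner_add_right, map_add]
  calc min a b * (1 - (ker T).cosAngle (ker S)) * ‖x‖ ^ 2
      ≤ min a b * (‖x‖ ^ 2 - ‖(ker T).starProjection x‖ ^ 2)
        + min a b * (‖x‖ ^ 2 - ‖(ker S).starProjection x‖ ^ 2) := by
        linarith [mul_le_mul_of_nonneg_left hangle hm]
    _ ≤ a * (‖x‖ ^ 2 - ‖(ker T).starProjection x‖ ^ 2)
        + b * (‖x‖ ^ 2 - ‖(ker S).starProjection x‖ ^ 2) :=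
      add_le_add (mul_le_mul_of_nonneg_right (min_le_left a b) hpT)
        (mul_le_mul_of_nonneg_right (min_le_right a b) hpS)
    _ ≤ _ := add_le_add hT' hS'

end LinearMap.IsSymmetric

namespace Matrix

variable {𝕜 n : Type*} [RCLike 𝕜] [Fintype n]

open WithLp (toLp)

theorem star_dotProduct_eq_inner (u v : n → 𝕜) : star u ⬝ᵥ v = ⟪toLp 2 u, toLp 2 v⟫_𝕜 :=
  dotProduct_comm _ _

theorem star_dotProduct_self_eq_one_iff (u : n → 𝕜) : star u ⬝ᵥ u = 1 ↔ ‖toLp 2 u‖ = 1 := by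
  rw [star_dotProduct_eq_inner, inner_self_eq_norm_sq_to_K]
  norm_cast
  exact pow_eq_one_iff_of_nonneg (norm_nonneg _) two_ne_zero

theorem PosSemidef.posDef_add {A B : Matrix n n 𝕜} (hA : A.PosSemidef) (hB : B.PosSemidef)
    (hker : ∀ v : n → 𝕜, A *ᵥ v = 0 → B *ᵥ v = 0 → v = 0) : (A + B).PosDef := by
  refine .of_dotProduct_mulVec_pos (hA.isHermitian.add hB.isHermitian) fun v hv => ?_
  rw [add_mulVec, dotProduct_add]
  refine lt_of_le_of_ne (add_nonneg (hA.dotProduct_mulVec_nonneg v) (hB.dotProduct_mulVec_nonneg v))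
    fun h => ?_
  obtain ⟨hAv, hBv⟩ := (add_eq_zero_iff_of_nonneg (hA.dotProduct_mulVec_nonneg v)
    (hB.dotProduct_mulVec_nonneg v)).mp h.symm
  exact hv (hker v ((hA.dotProduct_mulVec_zero_iff v).mp hAv)
    ((hB.dotProduct_mulVec_zero_iff v).mp hBv))

variable [DecidableEq n]

theorem toLp_mem_ker_toEuclideanLin_iff (A : Matrix n n 𝕜) (u : n → 𝕜) :
    toLp 2 u ∈ LinearMap.ker (toEuclideanLin A) ↔ A *ᵥ u = 0 := by
  simp [toLpLin_apply]

theorem cosAngle_ker_toEuclideanLin (A B : Matrix n n 𝕜) :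
    (LinearMap.ker (toEuclideanLin A)).cosAngle (LinearMap.ker (toEuclideanLin B)) =
      sSup {r : ℝ | ∃ u v : n → 𝕜, A *ᵥ u = 0 ∧ B *ᵥ v = 0 ∧
        star u ⬝ᵥ u = 1 ∧ star v ⬝ᵥ v = 1 ∧ ‖star u ⬝ᵥ v‖ = r} := by
  unfold Submodule.cosAngle
  congr 1
  ext r
  simp only [Set.mem_ofPred_eq, star_dotProduct_self_eq_one_iff,
    ← toLp_mem_ker_toEuclideanLin_iff]
  simp only [star_dotProduct_eq_inner]
  constructor
  · rintro ⟨u, hu, v, hv, hu1, hv1, rfl⟩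
    exact ⟨u.ofLp, v.ofLp, hu, hv, hu1, hv1, rfl⟩
  · rintro ⟨u, v, hu, hv, hu1, hv1, rfl⟩
    exact ⟨_, hu, _, hv, hu1, hv1, rfl⟩

theorem exists_mulVec_eq_smul_of_hasEigenvalue {A : Matrix n n 𝕜} {μ : 𝕜}
    (hμ : HasEigenvalue (toEuclideanLin A) μ) : ∃ v : n → 𝕜, v ≠ 0 ∧ A *ᵥ v = μ • v := by
  obtain ⟨v, hv, hv0⟩ := hμ.exists_hasEigenvector
  refine ⟨v.ofLp, by simpa using hv0, ?_⟩
  simpa [toLpLin_apply] using congrArg WithLp.ofLp (mem_eigenspace_iff.mp hv)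

end Matrix

theorem stmt9_general (N : ℕ) (A B : Matrix (Fin N) (Fin N) ℂ)
    (hA : A.PosSemidef) (hB : B.PosSemidef)
    (hker : ∀ v : Fin N → ℂ, A *ᵥ v = 0 → B *ᵥ v = 0 → v = 0)
    (a b : ℝ) (ha0 : 0 < a) (hb0 : 0 < b)
    (haA : ∀ (μ : ℝ) (v : Fin N → ℂ), v ≠ 0 → A *ᵥ v = (μ : ℂ) • v → μ = 0 ∨ a ≤ μ)
    (hbB : ∀ (μ : ℝ) (v : Fin N → ℂ), v ≠ 0 → B *ᵥ v = (μ : ℂ) • v → μ = 0 ∨ b ≤ μ)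
    (c : ℝ)
    (hc : c = sSup {r : ℝ | ∃ u v : Fin N → ℂ, A *ᵥ u = 0 ∧ B *ᵥ v = 0 ∧
        star u ⬝ᵥ u = 1 ∧ star v ⬝ᵥ v = 1 ∧ ‖star u ⬝ᵥ v‖ = r}) :
    (∀ ψ : Fin N → ℂ, star ψ ⬝ᵥ ψ = 1 →
        0 < (star ψ ⬝ᵥ ((A + B) *ᵥ ψ)).re) ∧
    (∀ ψ : Fin N → ℂ, star ψ ⬝ᵥ ψ = 1 →
        min a b * (1 - c) ≤ (star ψ ⬝ᵥ ((A + B) *ᵥ ψ)).re) := by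
  refine ⟨fun ψ hψ => ?_, fun ψ hψ => ?_⟩
  · have hψ0 : ψ ≠ 0 := by rintro rfl; simp at hψ
    exact (Complex.pos_iff.mp ((PosSemidef.posDef_add hA hB hker).dotProduct_mulVec_pos hψ0)).1
  · have hgapA (μ : ℝ) (hμ : HasEigenvalue (toEuclideanLin A) μ) : μ = 0 ∨ a ≤ μ :=
      let ⟨v, hv0, hv⟩ := exists_mulVec_eq_smul_of_hasEigenvalue hμ
      haA μ v hv0 hv
    have hgapB (μ : ℝ) (hμ : HasEigenvalue (toEuclideanLin B) μ) : μ = 0 ∨ b ≤ μ :=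
      let ⟨v, hv0, hv⟩ := exists_mulVec_eq_smul_of_hasEigenvalue hμ
      hbB μ v hv0 hv
    have key := LinearMap.IsSymmetric.min_mul_one_sub_cosAngle_mul_norm_sq_le_re_inner_add
      (isSymmetric_toEuclideanLin_iff.mpr hA.isHermitian)
      (isSymmetric_toEuclideanLin_iff.mpr hB.isHermitian)
      ha0.le hb0.le hgapA hgapB (WithLp.toLp 2 ψ)
    rwa [(star_dotProduct_self_eq_one_iff ψ).mp hψ, one_pow, mul_one, ← map_add,
      cosAngle_ker_toEuclideanLin, ← hc, ← star_dotProduct_eq_inner] at key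

/-- Kitaev's geometric lemma: if `A, B` are PSD with trivially intersecting
kernels, `a, b` are their smallest nonzero eigenvalues, and
`c = cos θ = sup{|⟨u,v⟩| : u ∈ ker A, v ∈ ker B unit vectors}`, then the
smallest eigenvalue of `A + B` is positive and at least `min(a,b)(1 − cos θ)`. -/
theorem stmt9 (N : ℕ) (A B : Matrix (Fin N) (Fin N) ℂ)
    (hA : A.PosSemidef) (hB : B.PosSemidef)
    (hker : ∀ v : Fin N → ℂ, A *ᵥ v = 0 → B *ᵥ v = 0 → v = 0)
    (a b : ℝ) (ha0 : 0 < a) (hb0 : 0 < b)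
    (haA : ∀ (μ : ℝ) (v : Fin N → ℂ), v ≠ 0 → A *ᵥ v = (μ : ℂ) • v → μ = 0 ∨ a ≤ μ)
    (haA' : ∃ v : Fin N → ℂ, v ≠ 0 ∧ A *ᵥ v = (a : ℂ) • v)
    (hbB : ∀ (μ : ℝ) (v : Fin N → ℂ), v ≠ 0 → B *ᵥ v = (μ : ℂ) • v → μ = 0 ∨ b ≤ μ)
    (hbB' : ∃ v : Fin N → ℂ, v ≠ 0 ∧ B *ᵥ v = (b : ℂ) • v)
    (c : ℝ)
    (hc : c = sSup {r : ℝ | ∃ u v : Fin N → ℂ, A *ᵥ u = 0 ∧ B *ᵥ v = 0 ∧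
        star u ⬝ᵥ u = 1 ∧ star v ⬝ᵥ v = 1 ∧ ‖star u ⬝ᵥ v‖ = r}) :
    (∀ ψ : Fin N → ℂ, star ψ ⬝ᵥ ψ = 1 →
        0 < (star ψ ⬝ᵥ ((A + B) *ᵥ ψ)).re) ∧
    (∀ ψ : Fin N → ℂ, star ψ ⬝ᵥ ψ = 1 →
        min a b * (1 - c) ≤ (star ψ ⬝ᵥ ((A + B) *ᵥ ψ)).re) :=
  stmt9_general N A B hA hB hker a b ha0 hb0 haA hbB c hc
end

section
/- Suppose the circuit C accepts input x with probability 1, i.e., Π_acc U_T⋯U_1 |χ⟩ = U_T⋯U_1 |χ⟩ where |χ⟩ = |x⟩ ⊗ |0…0⟩ and Π_acc = |1⟩⟨1| on the output qubit. Then the history state |η⟩ = (1/√(T+1)) Σ_{t=0}^T (U_t⋯U_1 |χ⟩) ⊗ |t⟩ satisfies ⟨η| H_x |η⟩ = 0, where H_x = Σ_i H_in^i + H_out + Σ_t H_prop^t is the Feynman–Kitaev Hamiltonian. -/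
open Matrix Kronecker Finset

/-!
The history state is in fact annihilated by `H_x`, term by term. Against a clock projector
`|k⟩⟨l|` the history state only contributes its `l`-th workspace component `W l χ`. Hence the
input penalties act on `χ`, which satisfies every input constraint; the output penalty acts on
`W T χ`, which the accepting projector fixes, so the complementary projector kills it; and the
`t`-th propagation term produces `(W t χ - U t W (t-1) χ) ⊗ |t⟩ + (W (t-1) χ - U tᴴ W t χ) ⊗ |t-1⟩`,
which vanishes because `W t = U t W (t-1)` and `U t` is unitary.
-/

theorem kronecker_vecMulVec_mulVec_s10 {R α β : Type*} [CommSemiring R] [Fintype α] [Fintype β]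
    (A : Matrix α α R) (u v : β → R) (w : α → R) (c : β → R) :
    (A ⊗ₖ vecMulVec u v) *ᵥ (fun p : α × β => w p.1 * c p.2)
      = fun p => (A *ᵥ w) p.1 * ((v ⬝ᵥ c) * u p.2) := by
  funext p
  simp only [mulVec, dotProduct, Fintype.sum_prod_type, kroneckerMap_apply, vecMulVec_apply,
    sum_mul, mul_sum]
  rw [sum_comm]
  exact sum_congr rfl fun _ _ => sum_congr rfl fun _ _ => by ring

section Diagonal

variable {R α : Type*} [CommSemiring R] [Fintype α] [DecidableEq α]

theorem diagonal_mulVec_eq_zero {d v : α → R} (h : ∀ a, d a * v a = 0) :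
    diagonal d *ᵥ v = 0 := by
  funext a
  rw [mulVec_diagonal, h, Pi.zero_apply]

theorem diagonal_mulVec_eq_zero_of_mulVec_eq_self {d e v : α → R}
    (hv : diagonal d *ᵥ v = v) (hed : ∀ a, e a * d a = 0) : diagonal e *ᵥ v = 0 := by
  rw [← hv, mulVec_mulVec, diagonal_mul_diagonal]
  exact diagonal_mulVec_eq_zero fun a => by rw [hed, zero_mul]

end Diagonal

def OrthonormalUpTo {R β : Type*} [Semiring R] [StarRing R] [Fintype β] (T : ℕ)
    (b : ℕ → β → R) : Prop :=
  ∀ k ≤ T, ∀ l ≤ T, star (b k) ⬝ᵥ b l = if l = k then 1 else 0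

theorem orthonormalUpTo_of_eq_ite {R : Type*} [Semiring R] [StarRing R] {T : ℕ}
    {b : ℕ → Fin (T + 1) → R}
    (hb : ∀ k ≤ T, b k = fun i : Fin (T + 1) => if (i : ℕ) = k then (1 : R) else 0) :
    OrthonormalUpTo T b := by
  intro k hk l hl
  rw [hb k hk, hb l hl, dotProduct, sum_eq_single (⟨k, by omega⟩ : Fin (T + 1))]
  · by_cases h : l = k
    · simp [h]
    · simp [h, Ne.symm h]
  · intro j _ hj
    have hjk : (j : ℕ) ≠ k := fun h => hj (Fin.ext h)
    simp [hjk]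
  · simp

def historyState {R α β : Type*} [NonUnitalNonAssocSemiring R] (T : ℕ) (ψ : ℕ → α → R)
    (b : ℕ → β → R) : α × β → R :=
  ∑ t ∈ range (T + 1), fun p : α × β => ψ t p.1 * b t p.2

section HistoryState

variable {R α β : Type*} [CommRing R] [StarRing R] [Fintype α] [Fintype β]
  {T : ℕ} {b : ℕ → β → R}

theorem kronecker_vecMulVec_mulVec_historyState (hb : OrthonormalUpTo T b) (ψ : ℕ → α → R)
    (A : Matrix α α R) (u : β → R) {l : ℕ} (hl : l ≤ T) :
    (A ⊗ₖ vecMulVec u (star (b l))) *ᵥ historyState T ψ b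
      = fun p => (A *ᵥ ψ l) p.1 * u p.2 := by
  have hterm : ∀ s ∈ range (T + 1),
      (A ⊗ₖ vecMulVec u (star (b l))) *ᵥ (fun p : α × β => ψ s p.1 * b s p.2)
        = if s = l then fun p => (A *ᵥ ψ l) p.1 * u p.2 else (0 : α × β → R) := by
    intro s hs
    rw [kronecker_vecMulVec_mulVec_s10, hb l hl s (by simpa [Nat.lt_succ_iff] using hs)]
    split_ifs with h
    · subst h
      simp
    · funext p
      simp
  rw [historyState, mulVec_sum, sum_congr rfl hterm, sum_ite_eq' (range (T + 1)) l,
    if_pos (mem_range.mpr (by omega))]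

theorem kronecker_vecMulVec_mulVec_historyState_eq_zero (hb : OrthonormalUpTo T b)
    (ψ : ℕ → α → R) {A : Matrix α α R} (u : β → R) {l : ℕ} (hl : l ≤ T)
    (hA : A *ᵥ ψ l = 0) :
    (A ⊗ₖ vecMulVec u (star (b l))) *ᵥ historyState T ψ b = 0 := by
  rw [kronecker_vecMulVec_mulVec_historyState hb ψ A u hl, hA]
  exact funext fun _ => zero_mul _

theorem propagation_mulVec_historyState_eq_zero [DecidableEq α] (hb : OrthonormalUpTo T b)
    {ψ : ℕ → α → R} {U : Matrix α α R} (hU : Uᴴ * U = 1) {t : ℕ} (ht : t ≤ T)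
    (hψ : ψ t = U *ᵥ ψ (t - 1)) :
    ((1 : Matrix α α R) ⊗ₖ vecMulVec (b t) (star (b t))
        + (1 : Matrix α α R) ⊗ₖ vecMulVec (b (t - 1)) (star (b (t - 1)))
        - U ⊗ₖ vecMulVec (b t) (star (b (t - 1)))
        - Uᴴ ⊗ₖ vecMulVec (b (t - 1)) (star (b t))) *ᵥ historyState T ψ b = 0 := by
  have hψ' : Uᴴ *ᵥ ψ t = ψ (t - 1) := by rw [hψ, mulVec_mulVec, hU, one_mulVec]
  simp only [sub_mulVec, add_mulVec, kronecker_vecMulVec_mulVec_historyState hb _ _ _ ht,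
    kronecker_vecMulVec_mulVec_historyState hb _ _ _ (show t - 1 ≤ T by omega), one_mulVec,
    ← hψ, hψ']
  simp

end HistoryState

/-- If the circuit accepts `x` with probability 1 (the accepting projection on
the output qubit fixes `U_T⋯U_1 |χ⟩`), then the history state `|η⟩` satisfies
`⟨η| H_x |η⟩ = 0` for the Feynman–Kitaev Hamiltonian
`H_x = Σ_i H_in^i + H_out + Σ_t H_prop^t`.
Workspace `V = (ℂ²)^{⊗S}` is indexed by `Fin S → Fin 2`; the clock space
`ℂ^{T+1}` has standard basis `b 0, …, b T`; `W t = U_t⋯U_1`;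
`|χ⟩ = |x⟩ ⊗ |0…0⟩`. -/
theorem stmt10 (S n T : ℕ) (hn : n ≤ S) (hS : 0 < S)
    (x : Fin n → Fin 2)
    (U W : ℕ → Matrix (Fin S → Fin 2) (Fin S → Fin 2) ℂ)
    (hU : ∀ t, U t ∈ Matrix.unitaryGroup (Fin S → Fin 2) ℂ)
    (hW0 : W 0 = 1) (hW : ∀ t, W (t + 1) = U (t + 1) * W t)
    (b : ℕ → Fin (T + 1) → ℂ)
    (hb : ∀ k ≤ T, b k = fun i : Fin (T + 1) => if (i : ℕ) = k then (1 : ℂ) else 0)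
    (χ : (Fin S → Fin 2) → ℂ)
    (hχ : χ = fun f => if (∀ i : Fin n, f (Fin.castLE hn i) = x i) ∧
        (∀ j : Fin S, n ≤ (j : ℕ) → f j = 0) then 1 else 0)
    -- the circuit accepts with certainty:
    (hacc : (Matrix.diagonal fun f : Fin S → Fin 2 =>
        if f ⟨0, hS⟩ = 1 then (1 : ℂ) else 0) *ᵥ (W T *ᵥ χ) = W T *ᵥ χ)
    (Hx : Matrix ((Fin S → Fin 2) × Fin (T + 1)) ((Fin S → Fin 2) × Fin (T + 1)) ℂ)
    (hHx : Hx =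
      (∑ i : Fin n, (Matrix.diagonal fun f : Fin S → Fin 2 =>
          if f (Fin.castLE hn i) = x i then (0 : ℂ) else 1)
            ⊗ₖ vecMulVec (b 0) (star (b 0)))
      + (Matrix.diagonal fun f : Fin S → Fin 2 =>
          if f ⟨0, hS⟩ = 0 then (1 : ℂ) else 0) ⊗ₖ vecMulVec (b T) (star (b T))
      + ∑ t ∈ Finset.Icc 1 T, (1/2 : ℂ) •
          ((1 : Matrix (Fin S → Fin 2) (Fin S → Fin 2) ℂ) ⊗ₖ vecMulVec (b t) (star (b t))
            + (1 : Matrix (Fin S → Fin 2) (Fin S → Fin 2) ℂ)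
                ⊗ₖ vecMulVec (b (t-1)) (star (b (t-1)))
            - U t ⊗ₖ vecMulVec (b t) (star (b (t-1)))
            - (U t)ᴴ ⊗ₖ vecMulVec (b (t-1)) (star (b t))))
    (η : (Fin S → Fin 2) × Fin (T + 1) → ℂ)
    (hη : η = ((Real.sqrt (T + 1) : ℂ))⁻¹ • ∑ t ∈ Finset.range (T + 1),
        fun p : (Fin S → Fin 2) × Fin (T + 1) => (W t *ᵥ χ) p.1 * b t p.2) :
    star η ⬝ᵥ (Hx *ᵥ η) = 0 := by
  have hbasis := orthonormalUpTo_of_eq_ite hb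
  have hinput (i : Fin n) : (diagonal fun f : Fin S → Fin 2 =>
      if f (Fin.castLE hn i) = x i then (0 : ℂ) else 1) *ᵥ (W 0 *ᵥ χ) = 0 := by
    rw [hW0, one_mulVec]
    refine diagonal_mulVec_eq_zero fun f => ?_
    rw [hχ]
    beta_reduce
    by_cases hfi : f (Fin.castLE hn i) = x i
    · rw [if_pos hfi, zero_mul]
    · rw [if_neg hfi, one_mul, if_neg fun hf => hfi (hf.1 i)]
  have houtput : (diagonal fun f : Fin S → Fin 2 =>
      if f ⟨0, hS⟩ = 0 then (1 : ℂ) else 0) *ᵥ (W T *ᵥ χ) = 0 :=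
    diagonal_mulVec_eq_zero_of_mulVec_eq_self hacc fun f => by split_ifs <;> simp_all
  have hhistory : Hx *ᵥ historyState T (fun t => W t *ᵥ χ) b = 0 := by
    rw [hHx, add_mulVec, add_mulVec, sum_mulVec, sum_mulVec,
      sum_eq_zero fun i _ =>
        kronecker_vecMulVec_mulVec_historyState_eq_zero hbasis (fun t => W t *ᵥ χ) (b 0)
          (Nat.zero_le T) (hinput i),
      kronecker_vecMulVec_mulVec_historyState_eq_zero hbasis (fun t => W t *ᵥ χ) (b T)
        le_rfl houtput,
      sum_eq_zero fun t ht => ?_, zero_add, add_zero]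
    obtain ⟨s, rfl⟩ := Nat.exists_eq_add_one.mpr (mem_Icc.mp ht).1
    rw [smul_mulVec, propagation_mulVec_historyState_eq_zero hbasis
      (Unitary.star_mul_self_of_mem (hU (s + 1))) (mem_Icc.mp ht).2
      (by simp [hW, mulVec_mulVec]), smul_zero]
  unfold historyState at hhistory
  rw [hη, mulVec_smul, hhistory, smul_zero, dotProduct_zero]
end

section
/- The history state |η⟩ = (1/√(T+1)) Σ_{t=0}^T (U_t⋯U_1|χ⟩) ⊗ |t⟩ satisfies H_prop^t |η⟩ = 0 for every t ∈ [T], where H_prop^t = (1/2)(I⊗|t⟩⟨t| + I⊗|t-1⟩⟨t-1| − U_t⊗|t⟩⟨t-1| − U_t†⊗|t-1⟩⟨t|). -/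
/-!
The history state has slice `W_t χ` at clock value `t`. The two projector terms of `H_prop^t`
return the slices at `t` and `t - 1`; since `W_t = U_t W_{t-1}` and `U_t† U_t = 1`, the two hopping
terms return the same two slices, so everything cancels.
-/

open Matrix Kronecker Finset Real

section KroneckerRankOne

variable {l m n n' R : Type*} [Fintype m] [Fintype n] [CommSemiring R]

theorem kronecker_vecMulVec_mulVec_s17 (A : Matrix l m R) (x : n' → R) (y : n → R)
    (f : m × n → R) :
    (A ⊗ₖ vecMulVec x y) *ᵥ f = fun p => x p.2 * (A *ᵥ fun i => y ⬝ᵥ fun j => f (i, j)) p.1 := by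
  funext ⟨i, k⟩
  simp only [mulVec, dotProduct, Fintype.sum_prod_type, kroneckerMap_apply, vecMulVec_apply,
    Finset.mul_sum]
  exact Finset.sum_congr rfl fun _ _ => Finset.sum_congr rfl fun _ _ => by ring

theorem kronecker_vecMulVec_single_mulVec [DecidableEq n] (A : Matrix l m R) (x : n' → R)
    (j : n) (f : m × n → R) :
    (A ⊗ₖ vecMulVec x (Pi.single j 1)) *ᵥ f = fun p => x p.2 * (A *ᵥ fun i => f (i, j)) p.1 := by
  simp only [kronecker_vecMulVec_mulVec_s17, single_one_dotProduct]

end KroneckerRankOne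

theorem sum_mul_single_eq {m n R : Type*} [Fintype n] [DecidableEq n] [Semiring R]
    (v : n → m → R) :
    ∑ j, (fun p : m × n => v j p.1 * (Pi.single j 1 : n → R) p.2) = fun p => v p.2 p.1 := by
  funext ⟨i, k⟩
  simp [Finset.sum_apply, Pi.single_apply]

theorem stmt17_general (N T : ℕ) (U W : ℕ → Matrix (Fin N) (Fin N) ℂ)
    (hU : ∀ t, U t ∈ Matrix.unitaryGroup (Fin N) ℂ)
    (hW : ∀ t, W (t + 1) = U (t + 1) * W t)
    (b : ℕ → Fin (T + 1) → ℂ)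
    (hb : ∀ k ≤ T, b k = fun i : Fin (T + 1) => if (i : ℕ) = k then (1 : ℂ) else 0)
    (χ : Fin N → ℂ)
    (η : Fin N × Fin (T + 1) → ℂ)
    (hη : η = ((Real.sqrt (T + 1) : ℂ))⁻¹ • ∑ t ∈ Finset.range (T + 1),
        fun p : Fin N × Fin (T + 1) => (W t *ᵥ χ) p.1 * b t p.2)
    (t : ℕ) (ht1 : 1 ≤ t) (htT : t ≤ T) :
    ((1/2 : ℂ) •
      ((1 : Matrix (Fin N) (Fin N) ℂ) ⊗ₖ vecMulVec (b t) (star (b t))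
        + (1 : Matrix (Fin N) (Fin N) ℂ) ⊗ₖ vecMulVec (b (t-1)) (star (b (t-1)))
        - U t ⊗ₖ vecMulVec (b t) (star (b (t-1)))
        - (U t)ᴴ ⊗ₖ vecMulVec (b (t-1)) (star (b t)))) *ᵥ η = 0 := by
  have hb_single (k : Fin (T + 1)) : b k = Pi.single k 1 := by
    rw [hb k (Nat.lt_succ_iff.mp k.isLt)]
    funext i
    simp [Pi.single_apply, Fin.ext_iff]
  have hη_slice : η = ((Real.sqrt (T + 1) : ℂ))⁻¹ • fun p => (W p.2 *ᵥ χ) p.1 := by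
    rw [hη, Finset.sum_range]
    simp only [hb_single]
    rw [sum_mul_single_eq fun j : Fin (T + 1) => W j *ᵥ χ]
  obtain ⟨s, rfl⟩ : ∃ s, t = s + 1 := ⟨t - 1, by omega⟩
  have hUW : U (s + 1) *ᵥ (W s *ᵥ χ) = W (s + 1) *ᵥ χ := by
    rw [mulVec_mulVec, hW]
  have hUHW : (U (s + 1))ᴴ *ᵥ (W (s + 1) *ᵥ χ) = W s *ᵥ χ := by
    rw [mulVec_mulVec, hW, ← Matrix.mul_assoc, ← star_eq_conjTranspose, (hU (s + 1)).1,
      Matrix.one_mul]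
  have hb_t : b (s + 1) = Pi.single ⟨s + 1, by omega⟩ 1 := hb_single ⟨s + 1, by omega⟩
  have hb_pred : b s = Pi.single ⟨s, by omega⟩ 1 := hb_single ⟨s, by omega⟩
  rw [Nat.add_sub_cancel, hb_t, hb_pred, hη_slice]
  simp only [Pi.star_single, star_one, smul_mulVec, mulVec_smul, sub_mulVec, add_mulVec,
    kronecker_vecMulVec_single_mulVec, one_mulVec, hUW, hUHW, add_sub_cancel_left, sub_self, smul_zero]

/-- The history state `|η⟩ = (1/√(T+1)) Σ_{t=0}^T (U_t⋯U_1|χ⟩) ⊗ |t⟩`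
satisfies `H_prop^t |η⟩ = 0` for every `t ∈ [T]`, where `W t = U_t⋯U_1` and
`b 0,…,b T` is the standard orthonormal basis of `ℂ^{T+1}`. -/
theorem stmt17 (N T : ℕ) (U W : ℕ → Matrix (Fin N) (Fin N) ℂ)
    (hU : ∀ t, U t ∈ Matrix.unitaryGroup (Fin N) ℂ)
    (hW0 : W 0 = 1) (hW : ∀ t, W (t + 1) = U (t + 1) * W t)
    (b : ℕ → Fin (T + 1) → ℂ)
    (hb : ∀ k ≤ T, b k = fun i : Fin (T + 1) => if (i : ℕ) = k then (1 : ℂ) else 0)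
    (χ : Fin N → ℂ)
    (η : Fin N × Fin (T + 1) → ℂ)
    (hη : η = ((Real.sqrt (T + 1) : ℂ))⁻¹ • ∑ t ∈ Finset.range (T + 1),
        fun p : Fin N × Fin (T + 1) => (W t *ᵥ χ) p.1 * b t p.2)
    (t : ℕ) (ht1 : 1 ≤ t) (htT : t ≤ T) :
    ((1/2 : ℂ) •
      ((1 : Matrix (Fin N) (Fin N) ℂ) ⊗ₖ vecMulVec (b t) (star (b t))
        + (1 : Matrix (Fin N) (Fin N) ℂ) ⊗ₖ vecMulVec (b (t-1)) (star (b (t-1)))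
        - U t ⊗ₖ vecMulVec (b t) (star (b (t-1)))
        - (U t)ᴴ ⊗ₖ vecMulVec (b (t-1)) (star (b t)))) *ᵥ η = 0 :=
  stmt17_general N T U W hU hW b hb χ η hη t ht1 htT
end
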